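/- arXiv:1407.1210 — 6 statements merged into one kernel-verified Lean document; each statement's English description precedes it below -/
import Mathlib

section
/- Let C be an isomorphism-closed class of topological spaces. Then the following are equivalent: (1) C is closed under products, closed under subspaces, and closed under continuous bijective images; (2) C is the class of all topological spaces with at most one point, or the class of all indiscrete topological spaces, or the class of all topological spaces. -/
universe u

open Topology

/-- A class of topological spaces (in a fixed universe `u`). -/
abbrev TopClass := ∀ X : Type u, TopologicalSpace X → Prop

/-- `C` is closed under homeomorphisms. -/
def TopClass.IsoClosed (C : TopClass.{u}) : Prop :=
  ∀ (X Y : Type u) (tX : TopologicalSpace X) (tY : TopologicalSpace Y),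
    C X tX → Nonempty (@Homeomorph X Y tX tY) → C Y tY

/-- `C` is closed under arbitrary products (with the product topology). -/
def TopClass.ClosedUnderProducts (C : TopClass.{u}) : Prop :=
  ∀ (ι : Type u) (X : ι → Type u) (t : ∀ i, TopologicalSpace (X i)),
    (∀ i, C (X i) (t i)) → C (∀ i, X i) (@Pi.topologicalSpace ι X t)

/-- `C` is closed under subspaces (topological embeddings). -/
def TopClass.ClosedUnderSubspaces (C : TopClass.{u}) : Prop :=
  ∀ (X Y : Type u) (tX : TopologicalSpace X) (tY : TopologicalSpace Y),
    C X tX → (∃ f : Y → X, @IsEmbedding Y X tY tX f) → C Y tY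

/-- `C` is closed under continuous bijective images. -/
def TopClass.ClosedUnderContinuousBijectiveImages (C : TopClass.{u}) : Prop :=
  ∀ (X Y : Type u) (tX : TopologicalSpace X) (tY : TopologicalSpace Y),
    C X tX → (∃ f : X → Y, @Continuous X Y tX tY f ∧ Function.Bijective f) → C Y tY

/-- A topological space is indiscrete if its only open sets are `∅` and the whole space. -/
def IsIndiscreteTop (X : Type u) (tX : TopologicalSpace X) : Prop :=
  ∀ s : Set X, @IsOpen X tX s → s = ∅ ∨ s = Set.univ

/-!
The three classes are easily seen to have the closure properties. Conversely, suppose `C` has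
them. The empty product is a point, so `C` contains every subsingleton. If `C` contains a space
`X` with two points `a ≠ b` but only indiscrete spaces, then every indiscrete `Y` lies in `C`,
being a subspace of `X ^ Y` via `y ↦ (y' ↦ if y' = y then a else b)`. If `C` contains a space
with an open set `s` separating two points `x ∈ s`, `y ∉ s`, then the subspace `{x, y}` maps
continuously and bijectively onto the Sierpiński space, so the Sierpiński space lies in `C`, hence
every T0 space (a subspace of a Sierpiński power), in particular every discrete space, and finally
every space, a continuous bijective image of its underlying discrete space.
-/

theorem isIndiscreteTop_iff_indiscreteTopology {X : Type u} {t : TopologicalSpace X} :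
    IsIndiscreteTop X t ↔ @IndiscreteTopology X t :=
  ⟨fun h => ⟨le_antisymm le_top fun s hs => (TopologicalSpace.isOpen_top_iff s).2 (h s hs)⟩,
    fun _ s hs => (IndiscreteTopology.isOpen_iff s).1 hs⟩

theorem exists_isOpen_mem_notMem_of_not_isIndiscreteTop {X : Type u} [TopologicalSpace X]
    (h : ¬IsIndiscreteTop X ‹_›) : ∃ s : Set X, IsOpen s ∧ ∃ x ∈ s, ∃ y, y ∉ s := by
  simp only [IsIndiscreteTop, not_forall, not_or] at h
  obtain ⟨s, hs, hne, hnu⟩ := h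
  obtain ⟨x, hx⟩ := Set.nonempty_iff_ne_empty.2 hne
  exact ⟨s, hs, x, hx, (Set.ne_univ_iff_exists_notMem s).1 hnu⟩

theorem IndiscreteTopology.of_continuous_surjective {X Y : Type*} [TopologicalSpace X]
    [TopologicalSpace Y] [IndiscreteTopology X] {f : X → Y} (hf : Continuous f)
    (hsurj : Function.Surjective f) : IndiscreteTopology Y := by
  refine ⟨le_antisymm le_top fun s hs => (TopologicalSpace.isOpen_top_iff s).2 ?_⟩
  rw [← hsurj.image_preimage s]
  rcases (IndiscreteTopology.isOpen_iff _).1 (hs.preimage hf) with h | h <;>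
    simp [h, hsurj.range_eq]

namespace TopClass

theorem closedUnder_subsingleton :
    let C : TopClass.{u} := fun X _ => Subsingleton X
    C.ClosedUnderProducts ∧ C.ClosedUnderSubspaces ∧ C.ClosedUnderContinuousBijectiveImages :=
  ⟨fun _ _ _ _ => inferInstance,
    fun _ _ _ _ _ ⟨_, hf⟩ => hf.injective.subsingleton,
    fun _ _ _ _ _ ⟨_, _, hf⟩ => hf.surjective.subsingleton⟩

theorem closedUnder_isIndiscreteTop :
    let C : TopClass.{u} := IsIndiscreteTop
    C.ClosedUnderProducts ∧ C.ClosedUnderSubspaces ∧ C.ClosedUnderContinuousBijectiveImages := by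
  simp only [ClosedUnderProducts, ClosedUnderSubspaces, ClosedUnderContinuousBijectiveImages,
    isIndiscreteTop_iff_indiscreteTopology]
  refine ⟨fun _ _ _ _ => inferInstance, ?_, ?_⟩
  · rintro X Y tX tY _ ⟨_, hf⟩
    exact hf.isInducing.indiscreteTopology
  · rintro X Y tX tY _ ⟨_, hf, hbij⟩
    exact .of_continuous_surjective hf hbij.surjective

variable {C : TopClass.{u}}

theorem mem_of_subsingleton (hprod : C.ClosedUnderProducts) (hsub : C.ClosedUnderSubspaces)
    {Y : Type u} [TopologicalSpace Y] [Subsingleton Y] : C Y ‹_› :=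
  hsub _ Y _ _ (hprod PEmpty.{u + 1} (fun _ => PUnit) _ fun i => i.elim)
    ⟨fun _ i => i.elim, .of_subsingleton _⟩

theorem mem_of_indiscreteTopology (hprod : C.ClosedUnderProducts)
    (hsub : C.ClosedUnderSubspaces) {X : Type u} [TopologicalSpace X] [IndiscreteTopology X]
    [Nontrivial X] (hX : C X ‹_›) {Y : Type u} [TopologicalSpace Y] [IndiscreteTopology Y] :
    C Y ‹_› := by
  classical
  obtain ⟨a, b, hab⟩ := exists_pair_ne X
  let e : Y → Y → X := fun y y' => if y' = y then a else b
  have he : Function.Injective e := fun y₁ y₂ h => by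
    by_contra hne
    simpa [e, hne, hab] using congrFun h y₁
  refine hsub _ Y _ _ (hprod Y (fun _ => X) _ fun _ => hX) ⟨e, ⟨⟨?_⟩, he⟩⟩
  rw [IndiscreteTopology.eq_top Y, IndiscreteTopology.eq_top (Y → X), induced_top]

/- `ULift Prop` carries the Sierpiński topology, and the subspace `{x, y}` of `X` is modelled as
`ULift Prop` with the topology induced by `p ↦ if p then x else y`. -/
theorem mem_uliftProp_of_isOpen (hsub : C.ClosedUnderSubspaces)
    (hbij : C.ClosedUnderContinuousBijectiveImages) {X : Type u} [TopologicalSpace X]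
    (hX : C X ‹_›) {s : Set X} (hs : IsOpen s) {x y : X} (hx : x ∈ s) (hy : y ∉ s) :
    C (ULift.{u} Prop) inferInstance := by
  classical
  let σ : ULift.{u} Prop → X := fun p => if p.down then x else y
  have hσ : ∀ p, σ p ∈ s ↔ p.down := fun p => by by_cases h : p.down <;> simp [σ, h, hx, hy]
  have hσinj : Function.Injective σ := fun p q h => ULift.ext _ _ (propext <| by rw [← hσ, h, hσ])
  have hdown : (ULift.down : ULift.{u} Prop → Prop) = (· ∈ s) ∘ σ :=
    funext fun p => propext (hσ p).symm
  refine hbij _ _ (.induced σ ‹_›) _ (hsub _ _ _ _ hX ⟨σ, hσinj.isEmbedding_induced⟩)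
    ⟨id, continuous_id_iff_le.2 ?_, Function.bijective_id⟩
  change _ ≤ TopologicalSpace.induced ULift.down _
  rw [hdown, ← induced_compose]
  exact induced_mono (continuous_iff_le_induced.1 (continuous_Prop.2 hs))

theorem mem_of_t0Space (hprod : C.ClosedUnderProducts) (hsub : C.ClosedUnderSubspaces)
    (hS : C (ULift.{u} Prop) inferInstance) {Y : Type u} [TopologicalSpace Y] [T0Space Y] :
    C Y ‹_› :=
  hsub _ Y _ _ (hprod (TopologicalSpace.Opens Y) (fun _ => ULift Prop) _ fun _ => hS)
    ⟨_, (Homeomorph.piCongrRight fun _ => Homeomorph.ulift.symm).isEmbedding.comp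
      (TopologicalSpace.productOfMemOpens_isEmbedding Y)⟩

theorem mem_of_mem_uliftProp (hprod : C.ClosedUnderProducts) (hsub : C.ClosedUnderSubspaces)
    (hbij : C.ClosedUnderContinuousBijectiveImages) (hS : C (ULift.{u} Prop) inferInstance)
    (Y : Type u) (tY : TopologicalSpace Y) : C Y tY :=
  letI : TopologicalSpace Y := ⊥
  haveI : DiscreteTopology Y := ⟨rfl⟩
  hbij _ _ ⊥ tY (mem_of_t0Space hprod hsub hS) ⟨id, continuous_bot, Function.bijective_id⟩

end TopClass

theorem epireflective_closed_under_bimorphic_images_Top_general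
    (C : TopClass.{u}) :
    (C.ClosedUnderProducts ∧ C.ClosedUnderSubspaces ∧
        C.ClosedUnderContinuousBijectiveImages) ↔
      ((∀ (X : Type u) (tX : TopologicalSpace X), C X tX ↔ Subsingleton X) ∨
       (∀ (X : Type u) (tX : TopologicalSpace X), C X tX ↔ IsIndiscreteTop X tX) ∨
       (∀ (X : Type u) (tX : TopologicalSpace X), C X tX)) := by
  constructor
  · rintro ⟨hprod, hsub, hbij⟩
    by_cases hss : ∀ X tX, C X tX → Subsingleton X
    · exact .inl fun X tX => ⟨hss X tX, fun _ => TopClass.mem_of_subsingleton hprod hsub⟩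
    obtain ⟨X, tX, hX, hXnt⟩ : ∃ X tX, C X tX ∧ Nontrivial X := by
      simpa [not_subsingleton_iff_nontrivial] using hss
    by_cases hind : ∀ Y tY, C Y tY → IsIndiscreteTop Y tY
    · have := isIndiscreteTop_iff_indiscreteTopology.1 (hind X tX hX)
      refine .inr (.inl fun Y tY => ⟨hind Y tY, fun hY => ?_⟩)
      have := isIndiscreteTop_iff_indiscreteTopology.1 hY
      exact TopClass.mem_of_indiscreteTopology hprod hsub hX
    push Not at hind
    obtain ⟨Y, tY, hY, hYni⟩ := hind
    obtain ⟨s, hs, x, hx, y, hy⟩ := exists_isOpen_mem_notMem_of_not_isIndiscreteTop hYni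
    have hS := TopClass.mem_uliftProp_of_isOpen hsub hbij hY hs hx hy
    exact .inr (.inr (TopClass.mem_of_mem_uliftProp hprod hsub hbij hS))
  · rintro (h | h | h)
    · obtain rfl : C = fun X _ => Subsingleton X := funext₂ fun X tX => propext (h X tX)
      exact TopClass.closedUnder_subsingleton
    · obtain rfl : C = IsIndiscreteTop := funext₂ fun X tX => propext (h X tX)
      exact TopClass.closedUnder_isIndiscreteTop
    · exact ⟨fun _ _ _ _ => h _ _, fun _ _ _ _ _ _ => h _ _, fun _ _ _ _ _ _ => h _ _⟩

theorem epireflective_closed_under_bimorphic_images_Top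
    (C : TopClass.{u}) (hiso : C.IsoClosed) :
    (C.ClosedUnderProducts ∧ C.ClosedUnderSubspaces ∧
        C.ClosedUnderContinuousBijectiveImages) ↔
      ((∀ (X : Type u) (tX : TopologicalSpace X), C X tX ↔ Subsingleton X) ∨
       (∀ (X : Type u) (tX : TopologicalSpace X), C X tX ↔ IsIndiscreteTop X tX) ∨
       (∀ (X : Type u) (tX : TopologicalSpace X), C X tX)) :=
  epireflective_closed_under_bimorphic_images_Top_general C
end

section
/- Let C be an isomorphism-closed class of uniform spaces. Then the following are equivalent: (1) C is closed under products, closed under subspaces, and closed under uniformly continuous bijective images; (2) C is one of the following: the class of all uniform spaces with at most one point; the class of all indiscrete uniform spaces; the class of all uniform spaces of covering character at most λ₀, for some infinite cardinal λ₀; the class of all uniform spaces. -/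
universe u

open Uniformity

/-- A class of uniform spaces (in a fixed universe `u`). -/
abbrev UnifClass := ∀ X : Type u, UniformSpace X → Prop

/-- `C` is closed under uniform isomorphisms. -/
def UnifClass.IsoClosed (C : UnifClass.{u}) : Prop :=
  ∀ (X Y : Type u) (uX : UniformSpace X) (uY : UniformSpace Y),
    C X uX → Nonempty (@UniformEquiv X Y uX uY) → C Y uY

/-- `C` is closed under arbitrary products (with the product uniformity). -/
def UnifClass.ClosedUnderProducts (C : UnifClass.{u}) : Prop :=
  ∀ (ι : Type u) (X : ι → Type u) (t : ∀ i, UniformSpace (X i)),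
    (∀ i, C (X i) (t i)) → C (∀ i, X i) (@Pi.uniformSpace ι X t)

/-- `C` is closed under subspaces (uniform embeddings). -/
def UnifClass.ClosedUnderSubspaces (C : UnifClass.{u}) : Prop :=
  ∀ (X Y : Type u) (uX : UniformSpace X) (uY : UniformSpace Y),
    C X uX → (∃ f : Y → X, @IsUniformEmbedding Y X uY uX f) → C Y uY

/-- `C` is closed under uniformly continuous bijective images. -/
def UnifClass.ClosedUnderBijectiveImages (C : UnifClass.{u}) : Prop :=
  ∀ (X Y : Type u) (uX : UniformSpace X) (uY : UniformSpace Y),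
    C X uX → (∃ f : X → Y, @UniformContinuous X Y uX uY f ∧ Function.Bijective f) → C Y uY

/-- A uniform space is indiscrete if its only entourage is the whole square. -/
def IsIndiscreteUnif (X : Type u) (uX : UniformSpace X) : Prop :=
  ∀ V ∈ @uniformity X uX, V = Set.univ

/-- A subset of a uniform space is uniformly discrete if some entourage separates
all pairs of its distinct points. -/
def IsUniformlyDiscrete {X : Type u} (uX : UniformSpace X) (S : Set X) : Prop :=
  ∃ V ∈ @uniformity X uX, ∀ x ∈ S, ∀ y ∈ S, x ≠ y → (x, y) ∉ V

/-- A uniform space has covering character at most `lam` if every uniformly discrete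
subset has cardinality strictly less than `lam`. -/
def CovCharLE (X : Type u) (uX : UniformSpace X) (lam : Cardinal.{u}) : Prop :=
  ∀ S : Set X, IsUniformlyDiscrete uX S → Cardinal.mk S < lam


/-!
The empty product is a point, so `C` contains every subsingleton space. If some member `X` has
two points, every set `Y` embeds into the power `X ^ Y` (by characteristic functions), which is
indiscrete after coarsening; so `C` contains all indiscrete spaces. If some member is not
indiscrete, it has a uniformly discrete pair, and then uniformly discrete subsets of powers and
members show that `C` contains every discrete space of cardinality below `λ₀`, the least infinite
bound for the covering characters of members (every discrete space if there is none). Finally,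
a space of covering character at most `λ₀` is a bijective image of a subspace of a product of
such spaces. Conversely, covering character below an infinite `λ` passes to products because a
basic entourage of a product constrains only finitely many factors.
-/

open Filter Set Function
open scoped Cardinal

section UniformLemmas

variable {X Y : Type u} {uX : UniformSpace X}

lemma isIndiscreteUnif_iff_eq_top : IsIndiscreteUnif X uX ↔ uX = ⊤ := by
  refine ⟨fun h => UniformSpace.ext (top_unique fun V hV => mem_top.2 (h V hV)), ?_⟩
  rintro rfl V hV
  exact mem_top.1 hV

lemma UniformSpace.comap_top (f : Y → X) : (⊤ : UniformSpace X).comap f = ⊤ :=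
  UniformSpace.ext Filter.comap_top

lemma IsUniformlyDiscrete.mono {S T : Set X} (hST : S ⊆ T) (hT : IsUniformlyDiscrete uX T) :
    IsUniformlyDiscrete uX S :=
  let ⟨V, hV, hsep⟩ := hT
  ⟨V, hV, fun x hx y hy => hsep x (hST hx) y (hST hy)⟩

lemma IsUniformlyDiscrete.pi {ι : Type u} [Finite ι] {X : ι → Type u}
    {t : ∀ i, UniformSpace (X i)} {S : ∀ i, Set (X i)}
    (h : ∀ i, IsUniformlyDiscrete (t i) (S i)) :
    IsUniformlyDiscrete (Pi.uniformSpace X) (univ.pi S) := by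
  choose V hV hsep using h
  refine ⟨⋂ i, (fun p : (∀ i, X i) × (∀ i, X i) => (p.1 i, p.2 i)) ⁻¹' V i,
    iInter_mem.2 fun i => ?_, fun x hx y hy hne hxy => ?_⟩
  · rw [Pi.uniformity]
    exact mem_iInf_of_mem i (preimage_mem_comap (hV i))
  · obtain ⟨i, hi⟩ := Function.ne_iff.1 hne
    exact hsep i (x i) (hx i trivial) (y i) (hy i trivial) hi (mem_iInter.1 hxy i)

lemma exists_isUniformlyDiscrete_pair (h : ¬IsIndiscreteUnif X uX) :
    ∃ a b : X, a ≠ b ∧ IsUniformlyDiscrete uX {a, b} := by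
  simp only [IsIndiscreteUnif, not_forall, ← ne_eq, ne_univ_iff_exists_notMem] at h
  obtain ⟨V, hV, ⟨a, b⟩, hab⟩ := h
  refine ⟨a, b, fun h => hab (h ▸ refl_mem_uniformity hV), SetRel.symmetrize V,
    symmetrize_mem_uniformity hV, ?_⟩
  simp only [mem_insert_iff, mem_singleton_iff]
  rintro x (rfl | rfl) y (rfl | rfl) hne hxy
  all_goals first
    | exact hne rfl
    | exact hab hxy.1
    | exact hab hxy.2

lemma UniformSpace.comap_eq_bot_of_isUniformlyDiscrete_range {f : Y → X} (hf : Injective f)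
    (h : IsUniformlyDiscrete uX (range f)) : uX.comap f = ⊥ := by
  obtain ⟨V, hV, hsep⟩ := h
  refine uniformSpace_eq_bot.2 (mem_comap.2 ⟨V, hV, fun ⟨x, y⟩ hxy => ?_⟩)
  by_contra hne
  exact hsep _ ⟨x, rfl⟩ _ ⟨y, rfl⟩ (hf.ne hne) hxy

lemma injective_fun_ite_eq [DecidableEq Y] {a b : X} (hab : a ≠ b) :
    Injective fun y : Y => fun w => if w = y then a else b := by
  intro y y' h
  by_contra hne
  simpa [hne, hab] using congrFun h y

end UniformLemmas

namespace Cardinal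

lemma power_lt_of_lt_of_lt_aleph0 {lam κ n : Cardinal.{u}} (hlam : ℵ₀ ≤ lam) (hκ : κ < lam)
    (hn : n < ℵ₀) : κ ^ n < lam := by
  rcases lt_or_ge κ ℵ₀ with hfin | hinf
  · exact (power_lt_aleph0 hfin hn).trans_le hlam
  · exact (pow_le hinf hn).trans_lt hκ

lemma prod_lt_of_finite {ι : Type u} [Finite ι] {lam : Cardinal.{u}} {κ : ι → Cardinal.{u}}
    (hlam : ℵ₀ ≤ lam) (h : ∀ i, κ i < lam) : prod κ < lam := by
  have := Fintype.ofFinite ι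
  have hsup : Finset.univ.sup κ < lam :=
    (Finset.sup_lt_iff (aleph0_pos.trans_le hlam)).2 fun i _ => h i
  calc prod κ ≤ prod fun _ : ι => Finset.univ.sup κ :=
        prod_le_prod _ _ fun i => Finset.le_sup (Finset.mem_univ i)
    _ = Finset.univ.sup κ ^ #ι := prod_const' _ _
    _ < lam := power_lt_of_lt_of_lt_aleph0 hlam hsup (lt_aleph0_of_finite ι)

end Cardinal

section CoveringCharacter

variable {X Y : Type u} {uX : UniformSpace X} {uY : UniformSpace Y} {lam : Cardinal.{u}}

lemma SetRel.exists_maximal_isSeparated (U : SetRel X X) :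
    ∃ N, Maximal (fun N => N ⊆ univ ∧ U.IsSeparated N) N := by
  obtain ⟨N, hN⟩ := zorn_subset {N : Set X | U.IsSeparated N} fun c _ hc =>
    ⟨⋃₀ c, hc.pairwise_sUnion.2 ‹_›, fun _ => subset_sUnion_of_mem⟩
  exact ⟨N, by simpa using hN⟩

/-- The net is a maximal `U`-separated set, for a symmetric entourage `U` with `U ○ U ⊆ V`. -/
lemma CovCharLE.exists_net (h : CovCharLE X uX lam) {V : SetRel X X} (hV : V ∈ 𝓤[uX]) :
    ∃ (T : Set X) (c : X → T), #T < lam ∧ ∀ x y, c x = c y → (x, y) ∈ V := by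
  obtain ⟨U, hU, hUsymm, hUV⟩ := comp_symm_mem_uniformity_sets hV
  have := isRefl_of_mem_uniformity hU
  obtain ⟨T, hT⟩ := SetRel.exists_maximal_isSeparated U
  choose c hcT hc using fun x => SetRel.IsCover.of_maximal_isSeparated hT (mem_univ x)
  refine ⟨T, fun x => ⟨c x, hcT x⟩, h T ⟨U, hU, hT.1.2⟩, fun x y hxy => hUV ?_⟩
  simp only [Subtype.mk.injEq] at hxy
  exact ⟨c x, hc x, hxy ▸ SetRel.symm U (hc y)⟩

lemma covCharLE_pi (hlam : ℵ₀ ≤ lam) {ι : Type u} {X : ι → Type u}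
    {t : ∀ i, UniformSpace (X i)} (h : ∀ i, CovCharLE (X i) (t i) lam) :
    CovCharLE (∀ i, X i) (Pi.uniformSpace X) lam := by
  rintro S ⟨V, hV, hsep⟩
  rw [Pi.uniformity, mem_iInf] at hV
  obtain ⟨I, hI, W, hW, rfl⟩ := hV
  have := hI.to_subtype
  choose W' hW' hW'W using fun i : I => mem_comap.1 (hW i)
  choose T c hT hc using fun i : I => (h i).exists_net (hW' i)
  have hinj : Injective fun s : S => fun i : I => c i (s.1 i) := by
    rintro ⟨x, hx⟩ ⟨y, hy⟩ hxy
    by_contra hne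
    exact hsep x hx y hy (fun h => hne (Subtype.ext h))
      (mem_iInter.2 fun i => hW'W i (hc i _ _ (congrFun hxy i)))
  calc #S ≤ #(∀ i : I, T i) := Cardinal.mk_le_of_injective hinj
    _ = Cardinal.prod fun i => #(T i) := Cardinal.mk_pi _
    _ < lam := Cardinal.prod_lt_of_finite hlam hT

lemma CovCharLE.of_isUniformEmbedding {f : Y → X} (hf : @IsUniformEmbedding Y X uY uX f)
    (h : CovCharLE X uX lam) : CovCharLE Y uY lam := by
  rintro S ⟨W, hW, hsep⟩
  rw [← hf.comap_uniformity] at hW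
  obtain ⟨V, hV, hVW⟩ := mem_comap.1 hW
  have hS : IsUniformlyDiscrete uX (f '' S) := by
    refine ⟨V, hV, ?_⟩
    rintro _ ⟨x, hx, rfl⟩ _ ⟨y, hy, rfl⟩ hne hxy
    exact hsep x hx y hy (ne_of_apply_ne f hne) (hVW hxy)
  simpa [Cardinal.mk_image_eq hf.injective] using h _ hS

lemma CovCharLE.of_uniformContinuous_bijective {f : X → Y} (hf : UniformContinuous[uX, uY] f)
    (hbij : Bijective f) (h : CovCharLE X uX lam) : CovCharLE Y uY lam := by
  rintro S ⟨V, hV, hsep⟩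
  have hS : IsUniformlyDiscrete uX (f ⁻¹' S) :=
    ⟨_, hf hV, fun x hx y hy hne => hsep (f x) hx (f y) hy (hbij.1.ne hne)⟩
  rw [← image_preimage_eq S hbij.2, Cardinal.mk_image_eq hbij.1]
  exact h _ hS

end CoveringCharacter

namespace UnifClass

variable {C : UnifClass.{u}} {X Y : Type u} {uX : UniformSpace X} {lam : Cardinal.{u}}

lemma ClosedUnderSubspaces.comap (hsub : C.ClosedUnderSubspaces) (hX : C X uX) {f : Y → X}
    (hf : Injective f) : C Y (uX.comap f) :=
  hsub X Y uX _ hX ⟨f, isUniformEmbedding_comap hf⟩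

lemma ClosedUnderBijectiveImages.mono (hbij : C.ClosedUnderBijectiveImages) {u v : UniformSpace Y}
    (hu : C Y u) (huv : u ≤ v) : C Y v :=
  hbij Y Y u v hu ⟨id, le_iff_uniformContinuous_id.1 huv, bijective_id⟩

lemma mem_iInf_comap (hprod : C.ClosedUnderProducts) (hsub : C.ClosedUnderSubspaces)
    {ι : Type u} {X : ι → Type u} {t : ∀ i, UniformSpace (X i)} (hX : ∀ i, C (X i) (t i))
    {f : ∀ i, Y → X i} (hf : Injective fun y i => f i y) : C Y (⨅ i, (t i).comap (f i)) := by
  simpa [Pi.uniformSpace_eq, UniformSpace.comap_iInf, ← UniformSpace.comap_comap,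
    Function.comp_def] using hsub.comap (hprod ι X t hX) hf

lemma mem_of_subsingleton (hprod : C.ClosedUnderProducts) (hsub : C.ClosedUnderSubspaces)
    [Subsingleton Y] (uY : UniformSpace Y) : C Y uY := by
  have hpoint := hprod PEmpty (fun _ => PUnit) (fun _ => ⊥) PEmpty.elim
  exact Subsingleton.elim (α := UniformSpace Y) _ uY ▸
    hsub.comap hpoint (f := fun _ => PEmpty.elim) fun _ _ _ => Subsingleton.elim _ _

lemma top_mem (hprod : C.ClosedUnderProducts) (hsub : C.ClosedUnderSubspaces)
    (hbij : C.ClosedUnderBijectiveImages) [Nontrivial X] (hX : C X uX) (Y : Type u) : C Y ⊤ := by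
  classical
  obtain ⟨a, b, hab⟩ := exists_pair_ne X
  have hpow := hbij.mono (hprod Y (fun _ => X) (fun _ => uX) fun _ => hX) le_top
  simpa [UniformSpace.comap_top] using hsub.comap hpow (injective_fun_ite_eq hab)

lemma bot_mem_of_isUniformlyDiscrete_range (hsub : C.ClosedUnderSubspaces) (hX : C X uX)
    {f : Y → X} (hf : Injective f) (hd : IsUniformlyDiscrete uX (range f)) : C Y ⊥ :=
  UniformSpace.comap_eq_bot_of_isUniformlyDiscrete_range hf hd ▸ hsub.comap hX hf

lemma bot_mem_of_finite (hprod : C.ClosedUnderProducts) (hsub : C.ClosedUnderSubspaces)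
    (hX : C X uX) (hXind : ¬IsIndiscreteUnif X uX) [Finite Y] : C Y ⊥ := by
  classical
  obtain ⟨a, b, hab, hd⟩ := exists_isUniformlyDiscrete_pair hXind
  have hpow := hprod Y (fun _ => X) (fun _ => uX) fun _ => hX
  refine bot_mem_of_isUniformlyDiscrete_range hsub hpow (injective_fun_ite_eq hab)
    ((IsUniformlyDiscrete.pi fun _ => hd).mono ?_)
  rintro _ ⟨y, rfl⟩ w -
  by_cases hw : w = y <;> simp [hw]

lemma bot_mem_of_not_covCharLE (hsub : C.ClosedUnderSubspaces) (hX : C X uX)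
    (h : ¬CovCharLE X uX #Y) : C Y ⊥ := by
  simp only [CovCharLE, not_forall, not_lt] at h
  obtain ⟨S, hS, hYS⟩ := h
  obtain ⟨e⟩ := Cardinal.le_def Y S |>.1 hYS
  refine bot_mem_of_isUniformlyDiscrete_range hsub hX (f := Subtype.val ∘ e)
    (Subtype.val_injective.comp e.injective) (hS.mono ?_)
  rintro _ ⟨y, rfl⟩
  exact (e y).2

/-- `Y` embeds into the product of `(Y, ⊤)`, which makes the map injective, and of the discrete
spaces of `V`-nets, which make the induced uniformity finer than that of `Y`. -/
lemma mem_of_covCharLE (hprod : C.ClosedUnderProducts) (hsub : C.ClosedUnderSubspaces)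
    (hbij : C.ClosedUnderBijectiveImages) (htop : ∀ Y : Type u, C Y ⊤)
    (hbot : ∀ Y : Type u, #Y < lam → C Y ⊥) {uY : UniformSpace Y} (hY : CovCharLE Y uY lam) :
    C Y uY := by
  choose T c hT hc using fun V : {V // V ∈ 𝓤[uY]} => hY.exists_net V.2
  let F : Option {V // V ∈ 𝓤[uY]} → Type u := fun o => o.elim Y fun V => T V
  let t : ∀ o, UniformSpace (F o) := fun o => match o with
    | none => (⊤ : UniformSpace Y)
    | some V => (⊥ : UniformSpace (T V))
  let f : ∀ o, Y → F o := fun o => match o with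
    | none => id
    | some V => c V
  have hC : C Y (⨅ o, (t o).comap (f o)) := by
    refine mem_iInf_comap hprod hsub ?_ fun y y' h => congrFun h none
    rintro (_ | V)
    exacts [htop Y, hbot _ (hT V)]
  refine hbij.mono hC (UniformSpace.le_def.2 fun V hV => ?_)
  rw [iInf_uniformity]
  exact mem_iInf_of_mem (some ⟨V, hV⟩)
    (mem_comap.2 ⟨SetRel.id, mem_principal_self _, fun p hp => hc _ _ _ hp⟩)

def covCharBounds (C : UnifClass.{u}) : Set Cardinal.{u} :=
  {l | ℵ₀ ≤ l ∧ ∀ X uX, C X uX → CovCharLE X uX l}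

lemma bot_mem_of_notMem_covCharBounds (hprod : C.ClosedUnderProducts)
    (hsub : C.ClosedUnderSubspaces) (hX : C X uX) (hXind : ¬IsIndiscreteUnif X uX)
    (hY : ℵ₀ ≤ #Y → #Y ∉ C.covCharBounds) : C Y ⊥ := by
  rcases lt_or_ge #Y ℵ₀ with hfin | hinf
  · have := Cardinal.lt_aleph0_iff_finite.1 hfin
    exact bot_mem_of_finite hprod hsub hX hXind
  · simp only [covCharBounds, mem_ofPred_eq, not_and, not_forall] at hY
    obtain ⟨Z, uZ, hZ, hnot⟩ := hY hinf hinf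
    exact bot_mem_of_not_covCharLE hsub hZ hnot

lemma eq_covCharLE_or_eq_top (hprod : C.ClosedUnderProducts) (hsub : C.ClosedUnderSubspaces)
    (hbij : C.ClosedUnderBijectiveImages) (hX : C X uX) (hXind : ¬IsIndiscreteUnif X uX) :
    (∃ lam : Cardinal.{u}, ℵ₀ ≤ lam ∧ ∀ Y uY, C Y uY ↔ CovCharLE Y uY lam) ∨
      ∀ Y uY, C Y uY := by
  have hbot : ∀ Y : Type u, (ℵ₀ ≤ #Y → #Y ∉ C.covCharBounds) → C Y ⊥ :=
    fun Y => bot_mem_of_notMem_covCharBounds hprod hsub hX hXind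
  rcases C.covCharBounds.eq_empty_or_nonempty with hempty | hne
  · exact .inr fun Y uY => hbij.mono (hbot Y fun _ => hempty ▸ notMem_empty _) bot_le
  have : Nontrivial X := by
    obtain ⟨a, b, hab, -⟩ := exists_isUniformlyDiscrete_pair hXind
    exact ⟨a, b, hab⟩
  obtain ⟨hlam, hC⟩ := csInf_mem hne
  refine .inl ⟨_, hlam, fun Y uY => ⟨hC Y uY, mem_of_covCharLE hprod hsub hbij
    (top_mem hprod hsub hbij hX) (fun Z hZ => hbot Z fun _ => notMem_of_lt_csInf' hZ)⟩⟩

lemma closedUnderProducts_subsingleton : ClosedUnderProducts.{u} fun X _ => Subsingleton X :=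
  fun _ _ _ h => have := h; inferInstance

lemma closedUnderSubspaces_subsingleton : ClosedUnderSubspaces.{u} fun X _ => Subsingleton X :=
  fun _ _ _ _ _ ⟨_, hf⟩ => hf.injective.subsingleton

lemma closedUnderBijectiveImages_subsingleton :
    ClosedUnderBijectiveImages.{u} fun X _ => Subsingleton X :=
  fun _ _ _ _ _ ⟨_, _, hf⟩ => hf.surjective.subsingleton

lemma closedUnderProducts_indiscrete : ClosedUnderProducts.{u} IsIndiscreteUnif := by
  intro ι X t h
  simp only [isIndiscreteUnif_iff_eq_top] at h ⊢
  simp [Pi.uniformSpace_eq, h, UniformSpace.comap_top]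

lemma closedUnderSubspaces_indiscrete : ClosedUnderSubspaces.{u} IsIndiscreteUnif := by
  rintro X Y uX uY hX ⟨f, hf⟩
  rw [isIndiscreteUnif_iff_eq_top] at hX ⊢
  rw [← hf.isUniformInducing.comap_uniformSpace, hX, UniformSpace.comap_top]

lemma closedUnderBijectiveImages_indiscrete : ClosedUnderBijectiveImages.{u} IsIndiscreteUnif := by
  rintro X Y uX uY hX ⟨f, hf, hbij⟩ V hV
  have := hX (Prod.map f f ⁻¹' V) (hf hV)
  rwa [preimage_eq_univ_iff, (hbij.surjective.prodMap hbij.surjective).range_eq,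
    univ_subset_iff] at this

lemma closedUnderProducts_covCharLE (hlam : ℵ₀ ≤ lam) :
    ClosedUnderProducts fun X uX => CovCharLE X uX lam :=
  fun _ _ _ h => covCharLE_pi hlam h

lemma closedUnderSubspaces_covCharLE (lam : Cardinal.{u}) :
    ClosedUnderSubspaces fun X uX => CovCharLE X uX lam :=
  fun _ _ _ _ hX ⟨_, hf⟩ => hX.of_isUniformEmbedding hf

lemma closedUnderBijectiveImages_covCharLE (lam : Cardinal.{u}) :
    ClosedUnderBijectiveImages fun X uX => CovCharLE X uX lam :=
  fun _ _ _ _ hX ⟨_, hf, hbij⟩ => hX.of_uniformContinuous_bijective hf hbij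

end UnifClass

theorem epireflective_closed_under_bimorphic_images_Unif_general
    (C : UnifClass.{u}) :
    (C.ClosedUnderProducts ∧ C.ClosedUnderSubspaces ∧ C.ClosedUnderBijectiveImages) ↔
      ((∀ (X : Type u) (uX : UniformSpace X), C X uX ↔ Subsingleton X) ∨
       (∀ (X : Type u) (uX : UniformSpace X), C X uX ↔ IsIndiscreteUnif X uX) ∨
       (∃ lam : Cardinal.{u}, Cardinal.aleph0 ≤ lam ∧
         ∀ (X : Type u) (uX : UniformSpace X), C X uX ↔ CovCharLE X uX lam) ∨
       (∀ (X : Type u) (uX : UniformSpace X), C X uX)) := by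
  constructor
  · rintro ⟨hprod, hsub, hbij⟩
    by_cases htriv : ∀ X uX, C X uX → Subsingleton X
    · exact .inl fun X uX => ⟨htriv X uX, fun _ => UnifClass.mem_of_subsingleton hprod hsub uX⟩
    push Not at htriv
    obtain ⟨X₀, u₀, hX₀, _⟩ := htriv
    by_cases hind : ∀ X uX, C X uX → IsIndiscreteUnif X uX
    · refine .inr <| .inl fun Y uY => ⟨hind Y uY, fun hY => ?_⟩
      rw [isIndiscreteUnif_iff_eq_top.1 hY]
      exact UnifClass.top_mem hprod hsub hbij hX₀ Y
    push Not at hind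
    obtain ⟨X₁, u₁, hX₁, hX₁ind⟩ := hind
    exact .inr <| .inr <| UnifClass.eq_covCharLE_or_eq_top hprod hsub hbij hX₁ hX₁ind
  · rintro (h | h | ⟨lam, hlam, h⟩ | h)
    · obtain rfl : C = fun X _ => Subsingleton X := funext₂ fun X uX => propext (h X uX)
      exact ⟨UnifClass.closedUnderProducts_subsingleton,
        UnifClass.closedUnderSubspaces_subsingleton,
        UnifClass.closedUnderBijectiveImages_subsingleton⟩
    · obtain rfl : C = IsIndiscreteUnif := funext₂ fun X uX => propext (h X uX)
      exact ⟨UnifClass.closedUnderProducts_indiscrete,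
        UnifClass.closedUnderSubspaces_indiscrete,
        UnifClass.closedUnderBijectiveImages_indiscrete⟩
    · obtain rfl : C = fun X uX => CovCharLE X uX lam := funext₂ fun X uX => propext (h X uX)
      exact ⟨UnifClass.closedUnderProducts_covCharLE hlam,
        UnifClass.closedUnderSubspaces_covCharLE lam,
        UnifClass.closedUnderBijectiveImages_covCharLE lam⟩
    · exact ⟨fun _ _ _ _ => h _ _, fun _ _ _ _ _ _ => h _ _, fun _ _ _ _ _ _ => h _ _⟩

theorem epireflective_closed_under_bimorphic_images_Unif
    (C : UnifClass.{u}) (hiso : C.IsoClosed) :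
    (C.ClosedUnderProducts ∧ C.ClosedUnderSubspaces ∧ C.ClosedUnderBijectiveImages) ↔
      ((∀ (X : Type u) (uX : UniformSpace X), C X uX ↔ Subsingleton X) ∨
       (∀ (X : Type u) (uX : UniformSpace X), C X uX ↔ IsIndiscreteUnif X uX) ∨
       (∃ lam : Cardinal.{u}, Cardinal.aleph0 ≤ lam ∧
         ∀ (X : Type u) (uX : UniformSpace X), C X uX ↔ CovCharLE X uX lam) ∨
       (∀ (X : Type u) (uX : UniformSpace X), C X uX)) :=
  epireflective_closed_under_bimorphic_images_Unif_general C
end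

section
/- Let E be an isomorphism-closed class of separated uniform spaces that is closed under products and closed under closed subspaces. Let X be a separated uniform space and let (X_α)_{α∈A} be a nonempty family of subsets of X such that each X_α, equipped with the subspace uniformity, belongs to E. Then the intersection ⋂_{α∈A} X_α, equipped with the subspace uniformity, belongs to E. -/
universe u

open Uniformity

/-- A uniform space is separated if the intersection of all entourages is the diagonal. -/
def IsSeparatedUnif (X : Type u) (uX : UniformSpace X) : Prop :=
  ∀ x y : X, (∀ V ∈ @uniformity X uX, (x, y) ∈ V) → x = y

/-- `C` is closed under closed subspaces (uniform embeddings with closed range). -/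
def UnifClass.ClosedUnderClosedSubspaces (C : UnifClass.{u}) : Prop :=
  ∀ (X Y : Type u) (uX : UniformSpace X) (uY : UniformSpace Y),
    C X uX →
    (∃ f : Y → X, @IsUniformEmbedding Y X uY uX f ∧
      @IsClosed X uX.toTopologicalSpace (Set.range f)) → C Y uY

/-! The intersection `⋂ a, S a` embeds diagonally into the product `∀ a, S a`. This diagonal
embedding is uniform as soon as `A` is nonempty (composing with a projection gives the
inclusion into `X`), and its range, the set of families whose members all agree as points of
`X`, is closed because `X` is Hausdorff. -/

namespace Set

variable {ι X : Type*} (S : ι → Set X)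

def iInterToPi (y : ⋂ i, S i) (i : ι) : S i :=
  ⟨y, mem_iInter.1 y.2 i⟩

theorem isUniformEmbedding_iInterToPi [UniformSpace X] [Nonempty ι] :
    IsUniformEmbedding (iInterToPi S) := by
  obtain ⟨i⟩ := ‹Nonempty ι›
  have hproj : UniformContinuous fun g : ∀ j, S j => (g i : X) :=
    uniformContinuous_subtype_val.comp (Pi.uniformContinuous_proj _ i)
  have hmap : UniformContinuous (iInterToPi S) :=
    uniformContinuous_pi.2 fun j => uniformContinuous_subtype_val.subtype_mk _
  exact .of_comp hmap hproj isUniformEmbedding_subtype_val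

theorem range_iInterToPi [Nonempty ι] :
    range (iInterToPi S) = ⋂ (i) (j), {g : ∀ k, S k | (g i : X) = g j} := by
  obtain ⟨i₀⟩ := ‹Nonempty ι›
  ext g
  simp only [mem_range, mem_iInter, mem_ofPred_eq]
  refine ⟨?_, fun hg => ?_⟩
  · rintro ⟨y, rfl⟩ i j
    rfl
  · refine ⟨⟨g i₀, mem_iInter.2 fun i => hg i₀ i ▸ (g i).2⟩, funext fun i => ?_⟩
    exact Subtype.ext (hg i₀ i)

theorem isClosed_range_iInterToPi [TopologicalSpace X] [T2Space X] [Nonempty ι] :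
    IsClosed (range (iInterToPi S)) := by
  rw [range_iInterToPi]
  exact isClosed_iInter fun i => isClosed_iInter fun j =>
    isClosed_eq (continuous_subtype_val.comp (continuous_apply i))
      (continuous_subtype_val.comp (continuous_apply j))

end Set

theorem epireflective_T2Unif_closed_under_intersections_general
    (E : UnifClass.{u})
    (hprod : E.ClosedUnderProducts) (hclsub : E.ClosedUnderClosedSubspaces)
    (X : Type u) [uX : UniformSpace X] (hX : IsSeparatedUnif X uX)
    (A : Type u) [Nonempty A] (S : A → Set X)
    (hS : ∀ a : A, E (S a) inferInstance) :
    E (⋂ a : A, S a) inferInstance := by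
  have : T0Space X := t0Space_iff_uniformity.2 hX
  exact hclsub _ _ _ _ (hprod A (fun a => S a) _ hS)
    ⟨Set.iInterToPi S, Set.isUniformEmbedding_iInterToPi S, Set.isClosed_range_iInterToPi S⟩

/-- An epireflective class of separated uniform spaces is closed under nonempty
intersections of subspaces. -/
theorem epireflective_T2Unif_closed_under_intersections
    (E : UnifClass.{u}) (hiso : E.IsoClosed)
    (hprod : E.ClosedUnderProducts) (hclsub : E.ClosedUnderClosedSubspaces)
    (hsep : ∀ (X : Type u) (uX : UniformSpace X), E X uX → IsSeparatedUnif X uX)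
    (X : Type u) [uX : UniformSpace X] (hX : IsSeparatedUnif X uX)
    (A : Type u) [Nonempty A] (S : A → Set X)
    (hS : ∀ a : A, E (S a) inferInstance) :
    E (⋂ a : A, S a) inferInstance :=
  epireflective_T2Unif_closed_under_intersections_general E hprod hclsub X (uX := uX) hX A S hS
end

section
/- Let λ₀ be an infinite cardinal and let M be a complete metric space of covering character at most λ₀, i.e. every uniformly discrete subset of M has cardinality strictly less than λ₀. Then there exist a sequence (D_n)_{n∈ℕ} of sets, each of cardinality strictly less than λ₀ and each equipped with the discrete uniformity, a closed subset S of the product ∏_{n∈ℕ} D_n (with the product uniformity), and a uniformly continuous map f : S → M whose range is dense in M. -/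
universe u

open Uniformity

/-! For each `n` take a maximal `2⁻ⁿ`-separated set `Tₙ ⊆ M`: it is uniformly discrete, hence of
cardinality `< lam`, and every point of `M` lies within `2⁻ⁿ` of it. In `∏ Tₙ`, the sequences
whose consecutive terms are `2 * 2⁻ⁿ`-close form a closed set, since each condition involves only
two discrete coordinates. They are geometrically Cauchy, and sending one to its limit is uniformly
continuous because two sequences agreeing in the `n`-th coordinate have limits `8 * 2⁻ⁿ`-close.
Any `m ∈ M` is the limit of a sequence of net points `2⁻ⁿ`-close to it, so the limit map is onto. -/

open Filter Topology Metric
open scoped NNReal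

theorem Metric.exists_isSeparated_isCover {X : Type*} [PseudoEMetricSpace X] (ε : ℝ≥0) :
    ∃ N : Set X, IsSeparated ε N ∧ IsCover ε Set.univ N := by
  obtain ⟨N, hN⟩ := zorn_subset {N : Set X | N ⊆ Set.univ ∧ IsSeparated ε N} fun c hc hchain =>
    ⟨⋃₀ c, ⟨Set.subset_univ _, hchain.pairwise_sUnion.2 fun s hs => (hc hs).2⟩,
      fun _ => Set.subset_sUnion_of_mem⟩
  exact ⟨N, hN.prop.2, .of_maximal_isSeparated hN⟩

theorem Metric.IsSeparated.isUniformlyDiscrete {X : Type u} [PseudoEMetricSpace X] {ε : ENNReal}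
    {N : Set X} (hε : 0 < ε) (hN : IsSeparated ε N) :
    IsUniformlyDiscrete ‹PseudoEMetricSpace X›.toUniformSpace N :=
  ⟨_, edist_mem_uniformity hε, fun _ hx _ hy hxy hlt => (hN hx hy hxy).not_gt hlt⟩

section NetChains

variable {M : Type*} [MetricSpace M] {D : ℕ → Type*} (p : ∀ n, D n → M)

def netChains : Set (∀ n, D n) :=
  {x | ∀ n, dist (p n (x n)) (p (n + 1) (x (n + 1))) ≤ 2 * (1 / 2) ^ n}

variable {p}

theorem cauchySeq_of_mem_netChains {x : ∀ n, D n} (hx : x ∈ netChains p) :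
    CauchySeq fun n => p n (x n) :=
  cauchySeq_of_le_geometric _ _ (by norm_num) hx

theorem dist_le_of_mem_netChains_of_tendsto {x : ∀ n, D n} (hx : x ∈ netChains p) {y : M}
    (hy : Tendsto (fun n => p n (x n)) atTop (𝓝 y)) (n : ℕ) :
    dist (p n (x n)) y ≤ 4 * (1 / 2) ^ n :=
  (dist_le_of_le_geometric_of_tendsto _ _ (by norm_num) hx hy n).trans_eq (by ring)

variable (p)

theorem isClosed_netChains [∀ n, UniformSpace (D n)] [∀ n, DiscreteUniformity (D n)] :
    IsClosed (netChains p) := by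
  rw [netChains, Set.ofPred_forall]
  exact isClosed_iInter fun n =>
    (isClosed_discrete {q : D n × D (n + 1) | dist (p n q.1) (p (n + 1) q.2) ≤ 2 * (1 / 2) ^ n}
      ).preimage ((continuous_apply n).prodMk (continuous_apply (n + 1)))

variable [CompleteSpace M]

noncomputable def chainLimit (x : netChains p) : M :=
  (cauchySeq_tendsto_of_complete (cauchySeq_of_mem_netChains x.2)).choose

theorem tendsto_chainLimit (x : netChains p) :
    Tendsto (fun n => p n (x.1 n)) atTop (𝓝 (chainLimit p x)) :=
  (cauchySeq_tendsto_of_complete (cauchySeq_of_mem_netChains x.2)).choose_spec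

theorem uniformContinuous_chainLimit [∀ n, UniformSpace (D n)] [∀ n, DiscreteUniformity (D n)] :
    UniformContinuous (chainLimit p) := by
  refine uniformity_basis_dist.tendsto_right_iff.2 fun δ hδ => ?_
  obtain ⟨n, hn⟩ := exists_pow_lt_of_lt_one (by positivity : 0 < δ / 8)
    (by norm_num : (1 / 2 : ℝ) < 1)
  have hcoord : ∀ᶠ q : netChains p × netChains p in 𝓤 _, q.1.1 n = q.2.1 n :=
    (UniformContinuous.comp (Pi.uniformContinuous_proj _ n) uniformContinuous_subtype_val)
      (DiscreteUniformity.relId_mem_uniformity (D n))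
  filter_upwards [hcoord] with q hq
  calc dist (chainLimit p q.1) (chainLimit p q.2)
      ≤ dist (p n (q.1.1 n)) (chainLimit p q.1) + dist (p n (q.2.1 n)) (chainLimit p q.2) := by
        rw [← hq]; exact dist_triangle_left _ _ _
    _ ≤ 4 * (1 / 2) ^ n + 4 * (1 / 2) ^ n :=
        add_le_add (dist_le_of_mem_netChains_of_tendsto q.1.2 (tendsto_chainLimit p q.1) n)
          (dist_le_of_mem_netChains_of_tendsto q.2.2 (tendsto_chainLimit p q.2) n)
    _ < δ := by linarith

theorem surjective_chainLimit (hp : ∀ n, IsCover ((1 / 2) ^ n) Set.univ (Set.range (p n))) :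
    Function.Surjective (chainLimit p) := by
  intro m
  have hnear : ∀ n, ∃ d, dist m (p n d) ≤ (1 / 2) ^ n := fun n => by
    simpa using isCover_iff_subset_iUnion_closedBall.1 (hp n) (Set.mem_univ m)
  choose x hx using hnear
  have hlim : Tendsto (fun n => p n (x n)) atTop (𝓝 m) :=
    tendsto_iff_dist_tendsto_zero.2 <| squeeze_zero (fun _ => dist_nonneg)
      (fun n => (dist_comm _ m).trans_le (hx n))
      (tendsto_pow_atTop_nhds_zero_of_lt_one (r := (1 / 2 : ℝ)) (by norm_num) (by norm_num))
  have hchain : x ∈ netChains p := fun n => by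
    calc dist (p n (x n)) (p (n + 1) (x (n + 1)))
        ≤ dist m (p n (x n)) + dist m (p (n + 1) (x (n + 1))) := dist_triangle_left _ _ _
      _ ≤ (1 / 2) ^ n + (1 / 2) ^ (n + 1) := add_le_add (hx n) (hx (n + 1))
      _ ≤ 2 * (1 / 2) ^ n := by
        rw [pow_succ]; linarith [pow_nonneg (by norm_num : (0 : ℝ) ≤ 1 / 2) n]
  exact ⟨⟨x, hchain⟩, tendsto_nhds_unique (tendsto_chainLimit p ⟨x, hchain⟩) hlim⟩

end NetChains

theorem dense_image_of_closed_subspace_of_prod_discrete_general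
    (lam : Cardinal.{u})
    (M : Type u) [MetricSpace M] [CompleteSpace M]
    (hcov : ∀ S : Set M, IsUniformlyDiscrete ‹MetricSpace M›.toUniformSpace S →
      Cardinal.mk S < lam) :
    ∃ (D : ℕ → Type u), (∀ n, Cardinal.mk (D n) < lam) ∧
      (letI : ∀ n, UniformSpace (D n) := fun _ => ⊥
       ∃ S : Set (∀ n, D n), IsClosed S ∧
         ∃ f : S → M, UniformContinuous f ∧ DenseRange f) := by
  choose T hsep hcover using fun n : ℕ => exists_isSeparated_isCover (X := M) ((1 / 2) ^ n)
  refine ⟨fun n => T n, fun n => hcov _ ((hsep n).isUniformlyDiscrete (by simp)), ?_⟩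
  -- `↥(T n)` also inherits a uniformity from `M`; the discrete one must be the instance found.
  let _ : ∀ n, UniformSpace (T n) := fun _ => ⊥
  exact ⟨netChains fun n => Subtype.val, isClosed_netChains _, chainLimit _,
    uniformContinuous_chainLimit _, (surjective_chainLimit _ (by simpa using hcover)).denseRange⟩

/-- Every complete metric space of covering character at most `lam` is a dense
uniformly continuous image of a closed subspace of a countable product of
discrete uniform spaces of cardinalities `< lam`. -/
theorem dense_image_of_closed_subspace_of_prod_discrete
    (lam : Cardinal.{u}) (hlam : Cardinal.aleph0 ≤ lam)
    (M : Type u) [MetricSpace M] [CompleteSpace M]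
    (hcov : ∀ S : Set M, IsUniformlyDiscrete ‹MetricSpace M›.toUniformSpace S →
      Cardinal.mk S < lam) :
    ∃ (D : ℕ → Type u), (∀ n, Cardinal.mk (D n) < lam) ∧
      (letI : ∀ n, UniformSpace (D n) := fun _ => ⊥
       ∃ S : Set (∀ n, D n), IsClosed S ∧
         ∃ f : S → M, UniformContinuous f ∧ DenseRange f) :=
  dense_image_of_closed_subspace_of_prod_discrete_general lam M hcov
end

section
/- Let C be an isomorphism-closed class of uniform spaces that is closed under products and closed under subspaces (i.e. C is an epireflective subcategory of the category of uniform spaces). Then the following are equivalent: (1) C is algebraic, i.e. the full subcategory C of uniform spaces has coequalizers, its underlying-set functor U : C → Set has a left adjoint, and U preserves and reflects regular epimorphisms; (2) C is the class of all uniform spaces with at most one point, or C is the class of all indiscrete uniform spaces. -/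
universe u

open Uniformity CategoryTheory CategoryTheory.Limits

/-- The full subcategory of `UniformSpaceCat` determined by a class of uniform spaces. -/
abbrev UnifClass.Cat (C : UnifClass.{u}) : Type (u + 1) :=
  ObjectProperty.FullSubcategory (fun X : UniformSpaceCat.{u} => C X X.str)

/-- The underlying-set functor of the full subcategory determined by `C`. -/
noncomputable def UnifClass.U (C : UnifClass.{u}) : C.Cat ⥤ Type u :=
  ObjectProperty.ι _ ⋙ forget UniformSpaceCat

/-- A concrete category (over `Type u`) is algebraic if it has coequalizers, its
underlying-set functor has a left adjoint and preserves and reflects regular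
epimorphisms. -/
def AlgebraicConcreteCategory {D : Type (u + 1)} [Category.{u} D] (U : D ⥤ Type u) : Prop :=
  HasCoequalizers D ∧ U.IsRightAdjoint ∧
    (∀ (A B : D) (f : A ⟶ B), Nonempty (RegularEpi f) → Nonempty (RegularEpi (U.map f))) ∧
    (∀ (A B : D) (f : A ⟶ B), Nonempty (RegularEpi (U.map f)) → Nonempty (RegularEpi f))

/-!
If `U` reflects regular epimorphisms, every member of `C` is indiscrete. Otherwise `C` contains a
discrete two-point space, hence every set with the uniformity generated by a point-separating
family of two-block partitions. On `ℕ` the partitions by all subsets and by all singletons give two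
such uniformities, the first strictly finer (parity separates them). The identity between them is
a bijection, so it would be a regular epimorphism and a monomorphism of `C`, hence an isomorphism.
An indiscrete `C` contains the one-point space (the empty product) and, once it has a member with
two points, every indiscrete space (a subspace of a power of that member).

Conversely, in both classes every map between members is uniformly continuous and every quotient
set with the indiscrete uniformity is a member, so coequalizers are computed as in sets: regular
epimorphisms are the surjections, and surjections split. The left adjoint sends `S` to `Trunc S`,
resp. to `S` with the indiscrete uniformity.
-/

open Filter Function

section Uniformity

variable {X Y : Type u}

theorem isIndiscreteUnif_iff (uX : UniformSpace X) : IsIndiscreteUnif X uX ↔ 𝓤[uX] = ⊤ :=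
  ⟨fun h => top_unique fun V hV => mem_top.2 (h V hV), fun h _ hV => mem_top.1 (h ▸ hV)⟩

theorem uniformity_eq_top_of_subsingleton [UniformSpace X] [Subsingleton X] : 𝓤 X = ⊤ :=
  top_unique fun _ hV => mem_top.2 <| Set.eq_univ_of_forall fun ⟨a, b⟩ =>
    Subsingleton.elim a b ▸ refl_mem_uniformity hV

theorem uniformContinuous_of_uniformity_eq_top [UniformSpace X] [UniformSpace Y]
    (h : 𝓤 Y = ⊤) (f : X → Y) : UniformContinuous f := by
  rw [UniformContinuous, h]
  exact tendsto_top

theorem Pi.uniformity_eq_top {ι : Type*} {X : ι → Type*} [∀ i, UniformSpace (X i)]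
    (h : ∀ i, 𝓤 (X i) = ⊤) : 𝓤 (∀ i, X i) = ⊤ := by
  simp only [Pi.uniformity, h, comap_top, iInf_top]

/-- `ULift Prop` with `⊥` serves as the discrete two-point space. -/
abbrev familyUniformity {ι T : Type u} (S : ι → Set T) : UniformSpace T :=
  UniformSpace.comap (fun x i => ULift.up.{u} (x ∈ S i))
    (@Pi.uniformSpace ι (fun _ => ULift Prop) fun _ => ⊥)

section familyUniformity

variable {ι ι' T : Type u} {S : ι → Set T} {S' : ι' → Set T}

theorem uniformity_familyUniformity :
    𝓤[familyUniformity S] = ⨅ i, 𝓟 {p : T × T | p.1 ∈ S i ↔ p.2 ∈ S i} := by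
  simp only [uniformity_comap, Pi.uniformity, comap_iInf, bot_uniformity, comap_principal]
  congr! 2 with i ⟨x, y⟩
  simp [SetRel.id]

theorem familyUniformity_le (h : ∀ j, ∃ i, S i = S' j) :
    familyUniformity S ≤ familyUniformity S' := by
  rw [UniformSpace.le_def, uniformity_familyUniformity, uniformity_familyUniformity]
  refine le_iInf fun j => ?_
  obtain ⟨i, hi⟩ := h j
  exact iInf_le_of_le i (by rw [hi])

theorem notMem_uniformity_familyUniformity_singleton {E : Set T} (hE : E.Infinite)
    (hE' : Eᶜ.Infinite) :
    {p : T × T | p.1 ∈ E ↔ p.2 ∈ E} ∉ 𝓤[familyUniformity fun x : T => {x}] := by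
  rw [uniformity_familyUniformity, (hasBasis_iInf_principal_finite _).mem_iff]
  rintro ⟨I, hI, hIE⟩
  obtain ⟨x, hxE, hxI⟩ := (hE.sdiff hI).nonempty
  obtain ⟨y, hyE, hyI⟩ := (hE'.sdiff hI).nonempty
  refine hyE ((hIE (show (x, y) ∈ _ from Set.mem_iInter₂.2 fun i hi => ?_)).1 hxE)
  simp only [Set.mem_singleton_iff, Set.mem_ofPred_eq]
  exact iff_of_false (fun h => hxI (h ▸ hi)) fun h => hyI (h ▸ hi)

end familyUniformity

end Uniformity

theorem nonempty_regularEpi_iff_surjective {X Y : Type u} (f : X ⟶ Y) :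
    Nonempty (RegularEpi f) ↔ Surjective f := by
  refine ⟨fun ⟨h⟩ => (epi_iff_surjective f).1 (h.epi f), fun hf => ?_⟩
  have := (epi_iff_surjective f).2 hf
  have := isSplitEpi_of_epi f
  exact ⟨RegularEpi.ofSplitEpi f⟩

noncomputable section

namespace UnifClass

variable {C : UnifClass.{u}}

def homMk {A B : C.Cat} (g : A.obj → B.obj) (hg : UniformContinuous g) : A ⟶ B :=
  ObjectProperty.homMk (UniformSpaceCat.ofHom ⟨g, hg⟩)

theorem uniformContinuous_U_map {A B : C.Cat} (f : A ⟶ B) :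
    UniformContinuous (α := A.obj) (β := B.obj) (C.U.map f) :=
  f.hom.hom.2

instance : C.U.Faithful := inferInstanceAs (ObjectProperty.ι _ ⋙ forget _).Faithful

section FullyFaithful

variable (hUC : ∀ (A B : C.Cat) (g : A.obj → B.obj), UniformContinuous g)
include hUC

def homEquivFun {A B : C.Cat} : (A ⟶ B) ≃ (A.obj → B.obj) where
  toFun f := C.U.map f
  invFun g := homMk g (hUC A B g)
  left_inv _ := C.U.map_injective rfl
  right_inv _ := rfl

theorem isRightAdjoint_U (F : Type u → C.Cat) (η : ∀ S, S → (F S).obj)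
    (hη : ∀ S (Y : C.Cat), Bijective fun g : (F S).obj → Y.obj => g ∘ η S) :
    C.U.IsRightAdjoint :=
  ⟨_, ⟨Adjunction.adjunctionOfEquivLeft
    (fun S Y => (homEquivFun hUC).trans <|
      (Equiv.ofBijective _ (hη S Y)).trans TypeCat.homEquiv.symm)
    fun _ _ _ _ _ => rfl⟩⟩

def regularEpiOfSurjective {A B : C.Cat} (f : A ⟶ B) (hf : Surjective (C.U.map f)) :
    RegularEpi f :=
  have : IsSplitEpi f := IsSplitEpi.mk'
    ⟨homMk (surjInv hf) (hUC _ _ _),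
      C.U.map_injective (ConcreteCategory.hom_ext _ _ (surjInv_eq hf))⟩
  RegularEpi.ofSplitEpi f

variable (hquot : ∀ (B : C.Cat) (r : B.obj → B.obj → Prop), C (Quot r) ⊤)
include hquot

def coequalizerObj {A B : C.Cat} (f g : A ⟶ B) : C.Cat :=
  ⟨@UniformSpaceCat.of (Coequalizer (C.U.map f) (C.U.map g)) ⊤, hquot B _⟩

def coequalizerπ {A B : C.Cat} (f g : A ⟶ B) : B ⟶ coequalizerObj hquot f g :=
  homMk (Coequalizer.mk _ _) (hUC _ _ _)

def coequalizerIsColimit {A B : C.Cat} (f g : A ⟶ B) :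
    IsColimit (Cofork.ofπ (coequalizerπ hUC hquot f g)
      (C.U.map_injective (ConcreteCategory.hom_ext _ _ (Coequalizer.condition _ _)))) :=
  Cofork.IsColimit.mk _
    (fun s => homMk (Coequalizer.desc _ _ (C.U.map s.π)
      (funext fun a => congrArg (fun k => C.U.map k a) s.condition)) (hUC _ _ _))
    (fun _ => rfl)
    (fun _ _ hm => C.U.map_injective (ConcreteCategory.hom_ext _ _ <|
      Quot.ind fun b => congrArg (fun k => C.U.map k b) hm))

theorem hasCoequalizers : HasCoequalizers C.Cat :=
  @hasCoequalizers_of_hasColimit_parallelPair _ _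
    fun {_ _ f g} => HasColimit.mk ⟨_, coequalizerIsColimit hUC hquot f g⟩

theorem surjective_U_map_of_regularEpi {A B : C.Cat} (f : A ⟶ B) (hf : RegularEpi f) :
    Surjective (C.U.map f) := by
  -- `f` is, up to isomorphism, the set-theoretic quotient map `coequalizerπ`
  let e :=
    (coequalizerIsColimit hUC hquot hf.left hf.right).coconePointUniqueUpToIso hf.isColimit
  have he : coequalizerπ hUC hquot hf.left hf.right ≫ e.hom = f :=
    IsColimit.comp_coconePointUniqueUpToIso_hom (F := parallelPair hf.left hf.right) _ _
      WalkingParallelPair.one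
  rw [← he, Functor.map_comp]
  exact ((isIso_iff_bijective (C.U.map e.hom)).1 inferInstance).2.comp
    (Coequalizer.mk_surjective _ _)

theorem algebraic_of_uniformContinuous (hadj : C.U.IsRightAdjoint) :
    AlgebraicConcreteCategory C.U := by
  refine ⟨hasCoequalizers hUC hquot, hadj, fun A B f ⟨hf⟩ => ?_, fun A B f ⟨hf⟩ => ?_⟩
  · exact (nonempty_regularEpi_iff_surjective _).2
      (surjective_U_map_of_regularEpi hUC hquot f hf)
  · exact ⟨regularEpiOfSurjective hUC f ((nonempty_regularEpi_iff_surjective _).1 ⟨hf⟩)⟩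

end FullyFaithful

theorem algebraic_of_forall_iff_subsingleton
    (hC : ∀ (X : Type u) (uX : UniformSpace X), C X uX ↔ Subsingleton X) :
    AlgebraicConcreteCategory C.U := by
  have hUC (A B : C.Cat) (g : A.obj → B.obj) : UniformContinuous g :=
    have := (hC _ _).1 A.property
    uniformContinuous_of_const fun a b => congrArg g (Subsingleton.elim a b)
  have hquot (B : C.Cat) (r : B.obj → B.obj → Prop) : C (Quot r) ⊤ :=
    have := (hC _ _).1 B.property
    (hC _ _).2 inferInstance
  refine algebraic_of_uniformContinuous hUC hquot <|
    isRightAdjoint_U hUC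
      (fun S => ⟨@UniformSpaceCat.of (Trunc S) ⊤, (hC _ _).2 inferInstance⟩)
      (fun _ => Trunc.mk) fun S Y => ?_
  have := (hC _ _).1 Y.property
  exact ⟨fun _ _ _ => Subsingleton.elim _ _,
    fun k => ⟨Trunc.lift k fun _ _ => Subsingleton.elim _ _, rfl⟩⟩

theorem algebraic_of_forall_iff_isIndiscreteUnif
    (hC : ∀ (X : Type u) (uX : UniformSpace X), C X uX ↔ IsIndiscreteUnif X uX) :
    AlgebraicConcreteCategory C.U := by
  have hUC (A B : C.Cat) (g : A.obj → B.obj) : UniformContinuous g :=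
    uniformContinuous_of_uniformity_eq_top
      ((isIndiscreteUnif_iff _).1 ((hC _ _).1 B.property)) g
  have hind (X : Type u) : C X ⊤ := (hC _ _).2 ((isIndiscreteUnif_iff ⊤).2 rfl)
  exact algebraic_of_uniformContinuous hUC (fun _ _ => hind _) <|
    isRightAdjoint_U hUC (fun S => ⟨@UniformSpaceCat.of S ⊤, hind S⟩) (fun _ => id)
      fun _ _ => bijective_id

section Closure

variable (hprod : C.ClosedUnderProducts) (hsub : C.ClosedUnderSubspaces)
include hsub

theorem mem_of_injective_of_uniformity_eq_top {Y Z : Type u} [uY : UniformSpace Y]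
    [uZ : UniformSpace Z] (hZ : C Z uZ) (hZtop : 𝓤 Z = ⊤) (hYtop : 𝓤 Y = ⊤) {f : Y → Z}
    (hf : Injective f) : C Y uY :=
  hsub Z Y uZ uY hZ ⟨f, ⟨⟨by rw [hZtop, hYtop, comap_top]⟩, hf⟩⟩

theorem mem_discrete_of_not_isIndiscreteUnif {X : Type u} {uX : UniformSpace X} (hX : C X uX)
    (hX' : ¬IsIndiscreteUnif X uX) : C (ULift Prop) ⊥ := by
  classical
  obtain ⟨V, hV, hVne⟩ : ∃ V ∈ 𝓤[uX], V ≠ Set.univ := by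
    simpa [IsIndiscreteUnif] using hX'
  obtain ⟨⟨c, d⟩, hcd⟩ := (Set.ne_univ_iff_exists_notMem V).1 hVne
  refine hsub X _ uX ⊥ hX ⟨fun p => if p.down then c else d,
    isUniformEmbedding_of_spaced_out (symmetrize_mem_uniformity hV) ?_⟩
  rintro ⟨p⟩ ⟨q⟩ hpq ⟨hV₁, hV₂⟩
  by_cases hp : p <;> by_cases hq : q
  · exact hpq (by simp [hp, hq])
  · simp only [hp, hq, if_true, if_false] at hV₁
    exact hcd hV₁
  · simp only [hp, hq, if_true, if_false] at hV₂
    exact hcd hV₂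
  · exact hpq (by simp [hp, hq])

include hprod

theorem mem_of_subsingleton_s7 {Y : Type u} (uY : UniformSpace Y) [Subsingleton Y] : C Y uY :=
  mem_of_injective_of_uniformity_eq_top hsub (hprod PEmpty (fun _ => Y) _ PEmpty.elim)
    uniformity_eq_top_of_subsingleton uniformity_eq_top_of_subsingleton
    (f := fun y (_ : PEmpty) => y) fun _ _ _ => Subsingleton.elim _ _

theorem mem_of_isIndiscreteUnif {X : Type u} {uX : UniformSpace X} (hX : C X uX)
    (hXind : IsIndiscreteUnif X uX) {a b : X} (hab : a ≠ b) {Y : Type u} (uY : UniformSpace Y)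
    (hY : IsIndiscreteUnif Y uY) : C Y uY := by
  classical
  refine mem_of_injective_of_uniformity_eq_top hsub (hprod Y (fun _ => X) _ fun _ => hX)
    (Pi.uniformity_eq_top fun _ => (isIndiscreteUnif_iff _).1 hXind)
    ((isIndiscreteUnif_iff _).1 hY)
    (f := fun y y' => if y' = y then a else b) fun y y' h => by_contra fun hne => hab ?_
  simpa [hne] using congrFun h y

theorem mem_familyUniformity (hD : C (ULift Prop) ⊥) {ι T : Type u} {S : ι → Set T}
    (hS : ∀ x y, (∀ i, x ∈ S i ↔ y ∈ S i) → x = y) : C T (familyUniformity S) :=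
  hsub _ T _ (familyUniformity S) (hprod ι (fun _ => ULift Prop) (fun _ => ⊥) fun _ => hD)
    ⟨_, isUniformEmbedding_comap (u := @Pi.uniformSpace ι (fun _ => ULift Prop) fun _ => ⊥)
      fun x y h => hS x y fun i => Iff.of_eq (congrArg ULift.down (congrFun h i))⟩

end Closure

section Reflects

variable (hrefl : ∀ (A B : C.Cat) (f : A ⟶ B), Nonempty (RegularEpi (C.U.map f)) →
  Nonempty (RegularEpi f))
include hrefl

theorem le_of_ge_of_reflects {T : Type u} {u u' : UniformSpace T} (hu : C T u) (hu' : C T u')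
    (h : u ≤ u') : u' ≤ u := by
  let f : (⟨@UniformSpaceCat.of T u, hu⟩ : C.Cat) ⟶ ⟨@UniformSpaceCat.of T u', hu'⟩ :=
    homMk id (le_iff_uniformContinuous_id.1 h)
  obtain ⟨hf⟩ := hrefl _ _ f ((nonempty_regularEpi_iff_surjective _).2 surjective_id)
  have : Mono f := C.U.mono_of_mono_map ((mono_iff_injective _).2 injective_id)
  have := isIso_of_regularEpi_of_mono f hf
  have hinv : ⇑(C.U.map (inv f)) = id :=
    (congrArg (fun k => ⇑(C.U.map k)) (IsIso.hom_inv_id f) :)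
  exact le_iff_uniformContinuous_id.2 (hinv ▸ uniformContinuous_U_map (inv f))

theorem isIndiscreteUnif_of_reflects (hprod : C.ClosedUnderProducts)
    (hsub : C.ClosedUnderSubspaces) {X : Type u} {uX : UniformSpace X} (hX : C X uX) :
    IsIndiscreteUnif X uX := by
  by_contra hX'
  have hD := mem_discrete_of_not_isIndiscreteUnif hsub hX hX'
  let E : Set (ULift.{u} ℕ) := {x | Even x.down}
  have hE : E.Infinite := Set.infinite_of_injective_forall_mem (f := fun n => ⟨2 * n⟩)
    (fun _ _ h => by simpa using h) fun n => even_two_mul n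
  have hE' : Eᶜ.Infinite := Set.infinite_of_injective_forall_mem (f := fun n => ⟨2 * n + 1⟩)
    (fun _ _ h => by simpa using h) fun n => Nat.not_even_iff_odd.2 (odd_two_mul_add_one n)
  have hle := le_of_ge_of_reflects hrefl
    (mem_familyUniformity hprod hsub hD (S := id) fun x _ h => ((h {x}).1 rfl).symm)
    (mem_familyUniformity hprod hsub hD (S := fun x : ULift ℕ => {x}) fun x _ h =>
      ((h x).1 rfl).symm)
    (familyUniformity_le fun x => ⟨{x}, rfl⟩)
  have hEA : {p | p.1 ∈ E ↔ p.2 ∈ E} ∈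
      𝓤[familyUniformity (id : Set (ULift ℕ) → Set (ULift ℕ))] := by
    rw [uniformity_familyUniformity]
    exact mem_iInf_of_mem E (mem_principal_self _)
  exact notMem_uniformity_familyUniformity_singleton hE hE' (hle hEA)

end Reflects

end UnifClass

end

theorem epireflective_algebraic_Unif_general
    (C : UnifClass.{u})
    (hprod : C.ClosedUnderProducts) (hsub : C.ClosedUnderSubspaces) :
    AlgebraicConcreteCategory C.U ↔
      ((∀ (X : Type u) (uX : UniformSpace X), C X uX ↔ Subsingleton X) ∨
       (∀ (X : Type u) (uX : UniformSpace X), C X uX ↔ IsIndiscreteUnif X uX)) := by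
  refine ⟨fun ⟨_, _, _, hrefl⟩ => ?_, ?_⟩
  · have hind (X : Type u) (uX : UniformSpace X) (hX : C X uX) : IsIndiscreteUnif X uX :=
      C.isIndiscreteUnif_of_reflects hrefl hprod hsub hX
    by_cases hnt : ∃ (X : Type u) (uX : UniformSpace X), C X uX ∧ Nontrivial X
    · obtain ⟨X, uX, hX, _⟩ := hnt
      obtain ⟨a, b, hab⟩ := exists_pair_ne X
      exact .inr fun Y uY =>
        ⟨hind Y uY, C.mem_of_isIndiscreteUnif hprod hsub hX (hind X uX hX) hab uY⟩
    · exact .inl fun X uX =>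
        ⟨fun hX => not_nontrivial_iff_subsingleton.1 fun h => hnt ⟨X, uX, hX, h⟩,
          fun _ => C.mem_of_subsingleton_s7 hprod hsub uX⟩
  · rintro (hC | hC)
    · exact C.algebraic_of_forall_iff_subsingleton hC
    · exact C.algebraic_of_forall_iff_isIndiscreteUnif hC

theorem epireflective_algebraic_Unif
    (C : UnifClass.{u}) (hiso : C.IsoClosed)
    (hprod : C.ClosedUnderProducts) (hsub : C.ClosedUnderSubspaces) :
    AlgebraicConcreteCategory C.U ↔
      ((∀ (X : Type u) (uX : UniformSpace X), C X uX ↔ Subsingleton X) ∨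
       (∀ (X : Type u) (uX : UniformSpace X), C X uX ↔ IsIndiscreteUnif X uX)) :=
  epireflective_algebraic_Unif_general C hprod hsub
end

section
/- Let C be an isomorphism-closed class of separated uniform spaces that is closed under products, closed under closed subspaces, and closed under uniformly continuous surjective images. If C contains a space with at least two points, then every compact separated uniform space belongs to C. -/
universe u

open Uniformity

/-- `C` is closed under uniformly continuous surjective images landing in
separated uniform spaces. -/
def UnifClass.ClosedUnderSurjectiveImages (C : UnifClass.{u}) : Prop :=
  ∀ (X Y : Type u) (uX : UniformSpace X) (uY : UniformSpace Y),
    C X uX → IsSeparatedUnif Y uY →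
    (∃ f : X → Y, @UniformContinuous X Y uX uY f ∧ Function.Surjective f) → C Y uY

/-!
A two-point subspace of `X₀` is finite, hence closed and discrete, so `C` contains the power
`D ^ Set K` and, as a closed subspace of it, the Stone–Čech compactification `Ultrafilter K` of
discrete `K` (a continuous injection of a compact space into a Hausdorff one is a closed
embedding). The limit map `Ultrafilter K → K` is a continuous surjection out of a compact space,
hence uniformly continuous, so `K` is in `C` as well.
-/

open Function Topology

theorem isSeparatedUnif_iff_t0Space {X : Type u} [u : UniformSpace X] :
    IsSeparatedUnif X u ↔ T0Space X :=
  t0Space_iff_uniformity.symm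

namespace Ultrafilter

variable {α D : Type*}

open scoped Classical in
noncomputable def memIndicator (a b : D) (F : Ultrafilter α) : Set α → D :=
  fun s => if s ∈ F then a else b

theorem continuous_memIndicator [TopologicalSpace D] [DiscreteTopology D] (a b : D) :
    Continuous (memIndicator a b : Ultrafilter α → Set α → D) := by
  refine continuous_pi fun s => ?_
  classical
  unfold memIndicator
  refine continuous_const.if (fun F hF => ?_) continuous_const
  have hclopen : IsClopen {F : Ultrafilter α | s ∈ F} :=
    ⟨ultrafilter_isClosed_basic s, ultrafilter_isOpen_basic s⟩
  simp [hclopen.frontier_eq] at hF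

theorem memIndicator_injective {a b : D} (hab : a ≠ b) :
    Injective (memIndicator a b : Ultrafilter α → Set α → D) := by
  intro F G hFG
  refine Ultrafilter.ext fun s => ?_
  have hs : memIndicator a b F s = memIndicator a b G s := congrFun hFG s
  by_cases hF : s ∈ F <;> by_cases hG : s ∈ G <;>
    simp [memIndicator, hF, hG, hab, hab.symm] at hs ⊢

theorem isClosedEmbedding_memIndicator [TopologicalSpace D] [DiscreteTopology D] {a b : D}
    (hab : a ≠ b) :
    IsClosedEmbedding (memIndicator a b : Ultrafilter α → Set α → D) :=
  (continuous_memIndicator a b).isClosedEmbedding (memIndicator_injective hab)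

end Ultrafilter

namespace UnifClass

variable {C : UnifClass.{u}}

theorem ClosedUnderClosedSubspaces.mem_subtype (hC : C.ClosedUnderClosedSubspaces)
    {X : Type u} [uX : UniformSpace X] (hX : C X uX) {S : Set X} (hS : IsClosed S) :
    C S inferInstance :=
  hC X S uX _ hX ⟨(↑), isUniformEmbedding_subtype_val, by rwa [Subtype.range_coe]⟩

theorem exists_mem_ultrafilter (hprod : C.ClosedUnderProducts)
    (hclsub : C.ClosedUnderClosedSubspaces) {D : Type u} [uD : UniformSpace D]
    [DiscreteTopology D] (hD : C D uD) {a b : D} (hab : a ≠ b) (α : Type u) :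
    ∃ uU : UniformSpace (Ultrafilter α),
      uU.toTopologicalSpace = Ultrafilter.topologicalSpace ∧ C (Ultrafilter α) uU := by
  have hP : C (Set α → D) inferInstance := hprod (Set α) (fun _ => D) (fun _ => uD) fun _ => hD
  have hemb := Ultrafilter.isClosedEmbedding_memIndicator (α := α) hab
  let uU := hemb.isEmbedding.comapUniformSpace _
  exact ⟨uU, rfl, hclsub _ _ _ uU hP
    ⟨_, Embedding.to_isUniformEmbedding _ hemb.isEmbedding, hemb.isClosed_range⟩⟩

theorem ClosedUnderSurjectiveImages.mem_of_compactSpace (hsurj : C.ClosedUnderSurjectiveImages)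
    {K : Type u} [uK : UniformSpace K] [T0Space K] [CompactSpace K]
    {uU : UniformSpace (Ultrafilter K)}
    (hU : uU.toTopologicalSpace = Ultrafilter.topologicalSpace) (hCU : C (Ultrafilter K) uU) :
    C K uK := by
  have hcomp : @CompactSpace _ uU.toTopologicalSpace := hU ▸ inferInstance
  have hcont : @Continuous _ _ uU.toTopologicalSpace _ (Ultrafilter.extend (id : K → K)) :=
    hU ▸ continuous_ultrafilter_extend id
  exact hsurj _ K uU uK hCU (isSeparatedUnif_iff_t0Space.2 inferInstance)
    ⟨Ultrafilter.extend id, CompactSpace.uniformContinuous_of_continuous hcont,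
      fun z => ⟨pure z, ultrafilter_extend_pure id z⟩⟩

end UnifClass

theorem compact_mem_of_nontrivial_T2Unif_general
    (C : UnifClass.{u})
    (hsep : ∀ (X : Type u) (uX : UniformSpace X), C X uX → IsSeparatedUnif X uX)
    (hprod : C.ClosedUnderProducts) (hclsub : C.ClosedUnderClosedSubspaces)
    (hsurj : C.ClosedUnderSurjectiveImages)
    (X₀ : Type u) (uX₀ : UniformSpace X₀) (hX₀ : C X₀ uX₀)
    (x y : X₀) (hxy : x ≠ y)
    (K : Type u) (uK : UniformSpace K) (hKsep : IsSeparatedUnif K uK)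
    (hKcomp : @CompactSpace K uK.toTopologicalSpace) :
    C K uK := by
  have : T0Space X₀ := isSeparatedUnif_iff_t0Space.1 (hsep X₀ uX₀ hX₀)
  have : T0Space K := isSeparatedUnif_iff_t0Space.1 hKsep
  let D : Set X₀ := {x, y}
  have hD : C D inferInstance := hclsub.mem_subtype hX₀ (Set.toFinite D).isClosed
  have hab : (⟨x, .inl rfl⟩ : D) ≠ ⟨y, .inr rfl⟩ := fun h => hxy (congrArg Subtype.val h)
  obtain ⟨uU, hU, hCU⟩ := UnifClass.exists_mem_ultrafilter hprod hclsub hD hab K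
  exact hsurj.mem_of_compactSpace hU hCU

theorem compact_mem_of_nontrivial_T2Unif
    (C : UnifClass.{u}) (hiso : C.IsoClosed)
    (hsep : ∀ (X : Type u) (uX : UniformSpace X), C X uX → IsSeparatedUnif X uX)
    (hprod : C.ClosedUnderProducts) (hclsub : C.ClosedUnderClosedSubspaces)
    (hsurj : C.ClosedUnderSurjectiveImages)
    (X₀ : Type u) (uX₀ : UniformSpace X₀) (hX₀ : C X₀ uX₀)
    (x y : X₀) (hxy : x ≠ y)
    (K : Type u) (uK : UniformSpace K) (hKsep : IsSeparatedUnif K uK)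
    (hKcomp : @CompactSpace K uK.toTopologicalSpace) :
    C K uK :=
  compact_mem_of_nontrivial_T2Unif_general C hsep hprod hclsub hsurj X₀ uX₀ hX₀ x y hxy K uK hKsep
    hKcomp
end
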